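/- arXiv:2102.00491 — 3 statements merged into one kernel-verified Lean document; each statement's English description precedes it below -/
import Mathlib

section
/- Let F : L²(D₁) → L²(D₂) be a Hilbert–Schmidt operator with SVD F f = ∑_j σ_j ⟨v_j, f⟩ u_j. Fix k ≥ 1, let V₁ = [v_1 | ⋯ | v_k] and V₂ = [v_{k+1} | v_{k+2} | ⋯ ] be quasimatrices of right singular functions, and let Σ₂ be the infinite diagonal matrix with entries σ_{k+1}, σ_{k+2}, …. Let Ω be any D₁ × ℓ quasimatrix, Y = FΩ, Ω₁ = V₁*Ω (a k × ℓ matrix with entries ⟨v_i, ω_j⟩), and Ω₂ = V₂*Ω. If Ω₁ has full rank, then ‖F − P_Y F‖_HS² ≤ ‖Σ₂‖_HS² + ‖Σ₂ Ω₂ Ω₁†‖_HS², where Ω₁† is the Moore–Penrose pseudoinverse of Ω₁ and ‖Σ₂‖_HS² = ∑_{j=k+1}^∞ σ_j². -/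
/-!
Each error term `‖F vₙ - P_Y F vₙ‖²` is at most `‖F vₙ - y‖²` for any `y ∈ span Y`.
For `n ≥ k` take `y = 0`, which gives `σₙ²`. For `i < k` take `y = F wᵢ` with
`wᵢ = ∑ⱼ (Ω₁†)ⱼᵢ Wⱼ`: since `Ω₁ Ω₁† = 1`, the vector `vᵢ - wᵢ` is orthogonal to
`v₀, …, v_{k-1}` and has coefficient `-(Ω₂ Ω₁†)ₙᵢ` against `v_{k+n}`, so the singular value
expansion gives `‖F (vᵢ - wᵢ)‖² = ∑ₙ σ_{k+n}² (Ω₂ Ω₁†)ₙᵢ²`.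
-/

open MeasureTheory Matrix RealInnerProductSpace

/-- The orthogonal projection of a real inner product space onto the span of finitely
many vectors `Y`. -/
noncomputable def projSpan {H : Type*} [NormedAddCommGroup H] [InnerProductSpace ℝ H]
    {m : ℕ} (Y : Fin m → H) : H → H := fun x =>
  haveI : FiniteDimensional ℝ (Submodule.span ℝ (Set.range Y)) :=
    FiniteDimensional.span_of_finite ℝ (Set.finite_range Y)
  haveI : CompleteSpace (Submodule.span ℝ (Set.range Y)) :=
    FiniteDimensional.complete ℝ _
  (Submodule.orthogonalProjection (Submodule.span ℝ (Set.range Y)) x : H)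

/-- The Moore–Penrose pseudoinverse of a `k × ℓ` matrix of full row rank:
`M† = Mᵀ (M Mᵀ)⁻¹`. -/
noncomputable def pinvRow {k l : ℕ} (M : Matrix (Fin k) (Fin l) ℝ) :
    Matrix (Fin l) (Fin k) ℝ :=
  Mᵀ * (M * Mᵀ)⁻¹

theorem Orthonormal.hasSum_sq_of_hasSum_smul {ι H : Type*} [NormedAddCommGroup H]
    [InnerProductSpace ℝ H] {u : ι → H} (hu : Orthonormal ℝ u) {c : ι → ℝ} {x : H}
    (hx : HasSum (fun i => c i • u i) x) : HasSum (fun i => c i ^ 2) (‖x‖ ^ 2) := by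
  have hcoord : ∀ i, ⟪x, u i⟫ = c i := fun i => by
    rw [real_inner_comm]
    refine ((innerSL ℝ (u i)).hasSum hx).unique ?_
    have h := hasSum_single (f := fun n => ⟪u i, c n • u n⟫) i fun n hn => by
      rw [real_inner_smul_right, hu.2 hn.symm, mul_zero]
    simpa [real_inner_smul_right, real_inner_self_eq_norm_sq, hu.1 i] using h
  have hxx := (innerSL ℝ x).hasSum hx
  simp only [innerSL_apply_apply, real_inner_smul_right, hcoord,
    real_inner_self_eq_norm_sq] at hxx
  simpa only [sq] using hxx

theorem Orthonormal.summable_smul_of_summable_sq {ι H : Type*} [NormedAddCommGroup H]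
    [InnerProductSpace ℝ H] [CompleteSpace H] {u : ι → H} (hu : Orthonormal ℝ u) {c : ι → ℝ}
    (hc : Summable fun i => c i ^ 2) : Summable fun i => c i • u i := by
  simpa using (hu.orthogonalFamily.summable_iff_norm_sq_summable c).2 (by simpa using hc)

theorem norm_sub_projSpan_le {H : Type*} [NormedAddCommGroup H] [InnerProductSpace ℝ H]
    {m : ℕ} {Y : Fin m → H} (x : H) {y : H} (hy : y ∈ Submodule.span ℝ (Set.range Y)) :
    ‖x - projSpan Y x‖ ≤ ‖x - y‖ := by
  have : FiniteDimensional ℝ (Submodule.span ℝ (Set.range Y)) :=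
    FiniteDimensional.span_of_finite ℝ (Set.finite_range Y)
  have : CompleteSpace (Submodule.span ℝ (Set.range Y)) := FiniteDimensional.complete ℝ _
  change ‖x - (Submodule.span ℝ (Set.range Y)).starProjection x‖ ≤ _
  rw [Submodule.starProjection_minimal]
  exact ciInf_le ⟨0, Set.forall_mem_range.mpr fun _ => norm_nonneg _⟩
    (⟨y, hy⟩ : Submodule.span ℝ (Set.range Y))

theorem Matrix.isUnit_of_rank_eq_card {n K : Type*} [Fintype n] [DecidableEq n] [Field K]
    {A : Matrix n n K} (h : A.rank = Fintype.card n) : IsUnit A := by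
  refine mulVec_surjective_iff_isUnit.mp fun y => ?_
  have htop : LinearMap.range A.mulVecLin = ⊤ :=
    Submodule.eq_top_of_finrank_eq (by rw [← Matrix.rank, h, Module.finrank_fintype_fun_eq_card])
  exact LinearMap.range_eq_top.mp htop y

theorem mul_pinvRow_of_rank_eq {k l : ℕ} {M : Matrix (Fin k) (Fin l) ℝ} (h : M.rank = k) :
    M * pinvRow M = 1 := by
  have hunit : IsUnit (M * Mᵀ) :=
    Matrix.isUnit_of_rank_eq_card (by rw [Matrix.rank_self_mul_transpose, h, Fintype.card_fin])
  rw [pinvRow, ← Matrix.mul_assoc,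
    Matrix.mul_nonsing_inv _ ((Matrix.isUnit_iff_isUnit_det _).mp hunit)]

theorem tsum_eq_sum_fin_add_tsum {G : Type*} [AddCommGroup G] [TopologicalSpace G]
    [IsTopologicalAddGroup G] [T2Space G] {f : ℕ → G} (hf : Summable f) (k : ℕ) :
    ∑' n, f n = ∑ i : Fin k, f i + ∑' n, f (k + n) := by
  rw [← hf.sum_add_tsum_nat_add k, Fin.sum_univ_eq_sum_range]
  simp only [add_comm _ k]

section SingularValueExpansion

variable {H1 H2 : Type*} [NormedAddCommGroup H1] [InnerProductSpace ℝ H1]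
  [NormedAddCommGroup H2] [InnerProductSpace ℝ H2] [CompleteSpace H2]
  {F : H1 →L[ℝ] H2} {σ : ℕ → ℝ} {v : ℕ → H1} {u : ℕ → H2}

theorem hasSum_singularValueExpansion (hv : Orthonormal ℝ v) (hu : Orthonormal ℝ u)
    (hσ : Summable fun n => σ n ^ 2) (hF : ∀ f, F f = ∑' n, (σ n * ⟪v n, f⟫) • u n) (f : H1) :
    HasSum (fun n => (σ n * ⟪v n, f⟫) • u n) (F f) := by
  have hbound : ∀ n, (σ n * ⟪v n, f⟫) ^ 2 ≤ σ n ^ 2 * ‖f‖ ^ 2 := fun n => by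
    have hcs : |⟪v n, f⟫| ≤ ‖f‖ := by
      simpa [hv.1 n] using abs_real_inner_le_norm (v n) f
    rw [mul_pow]
    exact mul_le_mul_of_nonneg_left (sq_le_sq' (abs_le.mp hcs).1 (abs_le.mp hcs).2) (sq_nonneg _)
  have hsum := hu.summable_smul_of_summable_sq <|
    (hσ.mul_right (‖f‖ ^ 2)).of_nonneg_of_le (fun n => sq_nonneg _) hbound
  exact hF f ▸ hsum.hasSum

theorem hasSum_sq_norm_singularValueExpansion (hv : Orthonormal ℝ v) (hu : Orthonormal ℝ u)
    (hσ : Summable fun n => σ n ^ 2) (hF : ∀ f, F f = ∑' n, (σ n * ⟪v n, f⟫) • u n) (f : H1) :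
    HasSum (fun n => (σ n * ⟪v n, f⟫) ^ 2) (‖F f‖ ^ 2) :=
  hu.hasSum_sq_of_hasSum_smul (hasSum_singularValueExpansion hv hu hσ hF f)

theorem sq_norm_apply_singularVector (hv : Orthonormal ℝ v) (hu : Orthonormal ℝ u)
    (hσ : Summable fun n => σ n ^ 2) (hF : ∀ f, F f = ∑' n, (σ n * ⟪v n, f⟫) • u n) (m : ℕ) :
    ‖F (v m)‖ ^ 2 = σ m ^ 2 := by
  refine (hasSum_sq_norm_singularValueExpansion hv hu hσ hF (v m)).unique ?_
  convert hasSum_single (f := fun n => (σ n * ⟪v n, v m⟫) ^ 2) m fun n hn => by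
    rw [hv.2 hn, mul_zero, sq, mul_zero] using 1
  rw [real_inner_self_eq_norm_sq, hv.1 m]
  ring

theorem hasSum_sq_norm_of_inner_eq_zero (hv : Orthonormal ℝ v) (hu : Orthonormal ℝ u)
    (hσ : Summable fun n => σ n ^ 2) (hF : ∀ f, F f = ∑' n, (σ n * ⟪v n, f⟫) • u n)
    {k : ℕ} {f : H1} (hf : ∀ m < k, ⟪v m, f⟫ = 0) :
    HasSum (fun n => (σ (k + n) * ⟪v (k + n), f⟫) ^ 2) (‖F f‖ ^ 2) := by
  have h := (hasSum_nat_add_iff' k).mpr (hasSum_sq_norm_singularValueExpansion hv hu hσ hF f)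
  rw [Finset.sum_eq_zero fun m hm => by
    rw [hf m (Finset.mem_range.mp hm), mul_zero, sq, mul_zero], sub_zero] at h
  simpa only [add_comm _ k] using h

theorem hasSum_sq_norm_sub_apply_combination (hv : Orthonormal ℝ v) (hu : Orthonormal ℝ u)
    (hσ : Summable fun n => σ n ^ 2) (hF : ∀ f, F f = ∑' n, (σ n * ⟪v n, f⟫) • u n)
    {k l i : ℕ} (hi : i < k) (W : Fin l → H1) (c : Fin l → ℝ)
    (hc : ∀ m < k, ∑ j, ⟪v m, W j⟫ * c j = if m = i then 1 else 0) :
    HasSum (fun n => (σ (k + n) * ∑ j, ⟪v (k + n), W j⟫ * c j) ^ 2)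
      (‖F (v i) - ∑ j, c j • F (W j)‖ ^ 2) := by
  classical
  have hinner : ∀ m, ⟪v m, v i - ∑ j, c j • W j⟫
      = (if m = i then 1 else 0) - ∑ j, ⟪v m, W j⟫ * c j := fun m => by
    simp only [inner_sub_right, inner_sum, real_inner_smul_right, orthonormal_iff_ite.mp hv,
      mul_comm (c _)]
  have h := hasSum_sq_norm_of_inner_eq_zero hv hu hσ hF (k := k) (f := v i - ∑ j, c j • W j)
    fun m hm => by rw [hinner, hc m hm, sub_self]
  have htail : ∀ n, k + n ≠ i := fun n => by omega
  simpa only [map_sub, map_sum, map_smul, hinner, htail, if_false, zero_sub, mul_neg, neg_sq]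
    using h

end SingularValueExpansion

theorem stmt_4_general {H1 H2 : Type*}
    [NormedAddCommGroup H1] [InnerProductSpace ℝ H1]
    [NormedAddCommGroup H2] [InnerProductSpace ℝ H2] [CompleteSpace H2]
    (F : H1 →L[ℝ] H2)
    (σ : ℕ → ℝ)
    (hσsum : Summable fun j => σ j ^ 2)
    (v : ℕ → H1) (u : ℕ → H2) (hv : Orthonormal ℝ v) (hu : Orthonormal ℝ u)
    (hSVD : ∀ f, F f = ∑' j, (σ j * ⟪v j, f⟫) • u j)
    (k l : ℕ)
    (W : Fin l → H1)
    (Y : Fin l → H2) (hY : Y = fun j => F (W j))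
    (Ω₁ : Matrix (Fin k) (Fin l) ℝ) (hΩ₁ : Ω₁ = Matrix.of fun (i : Fin k) (j : Fin l) => ⟪v i.val, W j⟫)
    (Ω₂ : ℕ → Fin l → ℝ) (hΩ₂ : Ω₂ = fun n j => ⟪v (k + n), W j⟫)
    (hrank : Ω₁.rank = k) :
    ∑' n, ‖F (v n) - projSpan Y (F (v n))‖ ^ 2
      ≤ (∑' n, σ (k + n) ^ 2) +
        ∑' n, ∑ i : Fin k, (σ (k + n) * ∑ j, Ω₂ n j * pinvRow Ω₁ j i) ^ 2 := by
  set E : ℕ → ℝ := fun n => ‖F (v n) - projSpan Y (F (v n))‖ ^ 2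
  have hE_le : ∀ n, E n ≤ σ n ^ 2 := fun n => by
    rw [← sq_norm_apply_singularVector hv hu hσsum hSVD n]
    simpa using pow_le_pow_left₀ (norm_nonneg _)
      (norm_sub_projSpan_le (F (v n)) (Submodule.zero_mem _)) 2
  have hE : Summable E := hσsum.of_nonneg_of_le (fun _ => sq_nonneg _) hE_le
  have hhead : ∀ i : Fin k, HasSum (fun n => (σ (k + n) * ∑ j, Ω₂ n j * pinvRow Ω₁ j i) ^ 2)
      (‖F (v i) - ∑ j, pinvRow Ω₁ j i • Y j‖ ^ 2) := fun i => by
    subst hY hΩ₂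
    refine hasSum_sq_norm_sub_apply_combination hv hu hσsum hSVD i.isLt W _ fun m hm => ?_
    simpa [hΩ₁, Matrix.mul_apply, Matrix.one_apply, Fin.ext_iff] using
      congr_fun₂ (mul_pinvRow_of_rank_eq hrank) ⟨m, hm⟩ i
  have hE_head : ∀ i : Fin k, E i ≤ ‖F (v i) - ∑ j, pinvRow Ω₁ j i • Y j‖ ^ 2 := fun i =>
    pow_le_pow_left₀ (norm_nonneg _) (norm_sub_projSpan_le _ <| Submodule.sum_mem _ fun j _ =>
      Submodule.smul_mem _ _ (Submodule.subset_span ⟨j, rfl⟩)) 2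
  calc ∑' n, E n = ∑ i : Fin k, E i + ∑' n, E (k + n) := tsum_eq_sum_fin_add_tsum hE k
    _ ≤ ∑ i : Fin k, ∑' n, (σ (k + n) * ∑ j, Ω₂ n j * pinvRow Ω₁ j i) ^ 2
          + ∑' n, σ (k + n) ^ 2 :=
      add_le_add (Finset.sum_le_sum fun i _ => (hE_head i).trans (hhead i).tsum_eq.ge)
        ((hE.comp_injective (add_right_injective k)).tsum_le_tsum (fun n => hE_le _)
          (hσsum.comp_injective (add_right_injective k)))
    _ = _ := by rw [← Summable.tsum_finsetSum fun i _ => (hhead i).summable, add_comm]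

/-- deterministic error bound for the randomized SVD of a
Hilbert–Schmidt operator. Let `F : H₁ → H₂` be a Hilbert–Schmidt operator with
(complete) SVD `F f = ∑_j σ_j ⟨v_j, f⟩ u_j` (indexed from `0`, so `σ_j` here is
`σ_{j+1}` of the paper). Fix `k ≥ 1`, let `Ω` be any `ℓ`-column quasimatrix with columns
in `H₁`, `Y = FΩ`, `Ω₁ = V₁*Ω` and `Ω₂ = V₂*Ω`. If `Ω₁` has full rank, then
`‖F − P_Y F‖²_HS ≤ ‖Σ₂‖²_HS + ‖Σ₂ Ω₂ Ω₁†‖²_HS`, where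
`‖Σ₂‖²_HS = ∑_{j≥k} σ_j²`. -/
theorem stmt_4 {H1 H2 : Type*}
    [NormedAddCommGroup H1] [InnerProductSpace ℝ H1] [CompleteSpace H1]
    [NormedAddCommGroup H2] [InnerProductSpace ℝ H2] [CompleteSpace H2]
    (F : H1 →L[ℝ] H2)
    (σ : ℕ → ℝ) (hσanti : Antitone σ) (hσnn : ∀ j, 0 ≤ σ j)
    (hσsum : Summable fun j => σ j ^ 2)
    (v : ℕ → H1) (u : ℕ → H2) (hv : Orthonormal ℝ v) (hu : Orthonormal ℝ u)
    (hvtot : (Submodule.span ℝ (Set.range v)).topologicalClosure = ⊤)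
    (hSVD : ∀ f, F f = ∑' j, (σ j * ⟪v j, f⟫) • u j)
    (k l : ℕ) (hk : 1 ≤ k) (hl : 1 ≤ l)
    (W : Fin l → H1)
    (Y : Fin l → H2) (hY : Y = fun j => F (W j))
    (Ω₁ : Matrix (Fin k) (Fin l) ℝ) (hΩ₁ : Ω₁ = Matrix.of fun (i : Fin k) (j : Fin l) => ⟪v i.val, W j⟫)
    (Ω₂ : ℕ → Fin l → ℝ) (hΩ₂ : Ω₂ = fun n j => ⟪v (k + n), W j⟫)
    (hrank : Ω₁.rank = k) :
    ∑' n, ‖F (v n) - projSpan Y (F (v n))‖ ^ 2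
      ≤ (∑' n, σ (k + n) ^ 2) +
        ∑' n, ∑ i : Fin k, (σ (k + n) * ∑ j, Ω₂ n j * pinvRow Ω₁ j i) ^ 2 :=
  stmt_4_general F σ hσsum v u hv hu hSVD k l W Y hY Ω₁ hΩ₁ Ω₂ hΩ₂ hrank
end

section
/- Let Ω = [ω_1 | ⋯ | ω_ℓ] be a D₁ × ℓ quasimatrix whose columns are independent random functions drawn from GP(0,K), with ℓ ≥ k ≥ 1, and let Ω₂ = V₂*Ω, where V₂ is any quasimatrix with (countably many) orthonormal columns in L²(D₁). Then for all s ≥ 1, P{ ‖Ω₂‖_HS² > ℓ s² Tr(K) } ≤ (s e^{−(s²−1)/2})^ℓ. -/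
/-!
Write `ω_j = ∑ₙ √λₙ c_{jn} ψₙ`. Bessel's inequality bounds `∑ₙ ⟪v₂ₙ, ω_j⟫²` by
`∑ₙ λₙ c_{jn}² = Tr(K) · Y_j`, where `Y_j = ∑ₙ wₙ c_{jn}²` with weights `wₙ = λₙ / Tr(K)` summing
to `1`. For the tail of `∑_j Y_j` use a Chernoff bound with `θ = (1 - s⁻²) / 2`: Jensen's inequality
for `exp` gives `exp (θ Y_j) ≤ ∑ₙ wₙ exp (θ c_{jn}²)`, whose expectation is
`E exp (θ c²) = (1 - 2θ)^(-1/2) = s` for a standard Gaussian `c`. The rows of `c` are independent,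
so the product over `j` has expectation `s^ℓ`, and Markov's inequality at level
`exp (θ ℓ s²) = exp (ℓ (s² - 1) / 2)` gives the bound.
-/

open MeasureTheory ProbabilityTheory Real RealInnerProductSpace
open scoped ENNReal

lemma Orthonormal.hasSum_norm_sq_of_hasSum {𝕜 E ι : Type*} [RCLike 𝕜] [NormedAddCommGroup E]
    [InnerProductSpace 𝕜 E] {ψ : ι → E} (hψ : Orthonormal 𝕜 ψ) {a : ι → 𝕜} {x : E}
    (h : HasSum (fun i ↦ a i • ψ i) x) : HasSum (fun i ↦ ‖a i‖ ^ 2) (‖x‖ ^ 2) :=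
  (((continuous_pow 2).comp continuous_norm).tendsto x |>.comp h).congr
    fun S ↦ hψ.orthogonalFamily.norm_sum a S

lemma Orthonormal.tsum_inner_tsum_smul_sq_le {E ι κ : Type*} [NormedAddCommGroup E]
    [InnerProductSpace ℝ E] {v : κ → E} {ψ : ι → E} (hv : Orthonormal ℝ v) (hψ : Orthonormal ℝ ψ)
    (a : ι → ℝ) : ∑' n, ⟪v n, ∑' i, a i • ψ i⟫ ^ 2 ≤ ∑' i, a i ^ 2 := by
  by_cases h : Summable fun i ↦ a i • ψ i
  · calc ∑' n, ⟪v n, ∑' i, a i • ψ i⟫ ^ 2 = ∑' n, ‖⟪v n, ∑' i, a i • ψ i⟫‖ ^ 2 := by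
          simp only [Real.norm_eq_abs, sq_abs]
      _ ≤ ‖∑' i, a i • ψ i‖ ^ 2 := hv.tsum_inner_products_le _
      _ = ∑' i, a i ^ 2 := by
          simpa only [Real.norm_eq_abs, sq_abs] using
            (hψ.hasSum_norm_sq_of_hasSum h.hasSum).tsum_eq.symm
  · simp only [tsum_eq_zero_of_not_summable h, inner_zero_right, ne_eq, OfNat.ofNat_ne_zero,
      not_false_eq_true, zero_pow, tsum_zero]
    exact tsum_nonneg fun i ↦ sq_nonneg _

lemma ENNReal.ofReal_exp_tsum_mul_le {ι : Type*} {w y : ι → ℝ} (hw : ∀ i, 0 ≤ w i)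
    (hw₁ : HasSum w 1) (hy : ∀ i, 0 ≤ y i) :
    ENNReal.ofReal (exp (∑' i, w i * y i)) ≤ ∑' i, ENNReal.ofReal (w i * exp (y i)) := by
  by_cases htop : ∑' i, ENNReal.ofReal (w i * exp (y i)) = ⊤
  · exact htop ▸ le_top
  have hwexp_nonneg (i : ι) : 0 ≤ w i * exp (y i) := mul_nonneg (hw i) (exp_pos _).le
  have hwexp : Summable fun i ↦ w i * exp (y i) :=
    (ENNReal.summable_toReal htop).congr fun i ↦ ENNReal.toReal_ofReal (hwexp_nonneg i)
  have hwy : HasSum (fun i ↦ w i * y i) (∑' i, w i * y i) :=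
    (hwexp.of_nonneg_of_le (fun i ↦ mul_nonneg (hw i) (hy i)) fun i ↦
      mul_le_mul_of_nonneg_left ((le_add_of_nonneg_right zero_le_one).trans
        (add_one_le_exp _)) (hw i)).hasSum
  rw [← ENNReal.ofReal_tsum_of_nonneg hwexp_nonneg hwexp]
  refine ENNReal.ofReal_le_ofReal ?_
  set S := ∑' i, w i * y i
  -- the tangent line of `exp` at `S` lies below `exp`, and its `w`-average is `exp S`
  have htangent (i : ι) : w i * (exp S * (1 + (y i - S))) ≤ w i * exp (y i) := by
    refine mul_le_mul_of_nonneg_left ?_ (hw i)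
    calc exp S * (1 + (y i - S)) ≤ exp S * exp (y i - S) := by
          gcongr; linarith [add_one_le_exp (y i - S)]
      _ = exp (y i) := by rw [← exp_add]; ring_nf
  have hline : HasSum (fun i ↦ w i * (exp S * (1 + (y i - S)))) (exp S) := by
    have h := (hw₁.mul_left (exp S * (1 - S))).add (hwy.mul_left (exp S))
    rw [show exp S * (1 - S) * 1 + exp S * S = exp S by ring] at h
    exact h.congr_fun fun i ↦ by ring
  exact hasSum_le htangent hline hwexp.hasSum

lemma lintegral_exp_mul_sq_gaussianReal {θ : ℝ} (hθ : θ < 1 / 2) :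
    ∫⁻ x, ENNReal.ofReal (exp (θ * x ^ 2)) ∂gaussianReal 0 1
      = ENNReal.ofReal (√(1 - 2 * θ))⁻¹ := by
  have hb : 0 < 1 / 2 - θ := by linarith
  have hdensity (x : ℝ) : gaussianPDFReal 0 1 x * exp (θ * x ^ 2)
      = (√(2 * π))⁻¹ * exp (-(1 / 2 - θ) * x ^ 2) := by
    simp only [gaussianPDFReal, NNReal.coe_one, mul_one, sub_zero, mul_assoc, ← exp_add]
    ring_nf
  have hint : Integrable (fun x ↦ gaussianPDFReal 0 1 x * exp (θ * x ^ 2)) := by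
    simpa only [hdensity] using (integrable_exp_neg_mul_sq hb).const_mul (√(2 * π))⁻¹
  rw [gaussianReal_of_var_ne_zero 0 one_ne_zero, lintegral_withDensity_eq_lintegral_mul _
    (measurable_gaussianPDF 0 1) (by fun_prop)]
  simp_rw [Pi.mul_apply, gaussianPDF, ← ENNReal.ofReal_mul (gaussianPDFReal_nonneg 0 1 _)]
  rw [← ofReal_integral_eq_lintegral_ofReal hint
    (.of_forall fun x ↦ mul_nonneg (gaussianPDFReal_nonneg 0 1 x) (exp_pos _).le)]
  simp_rw [hdensity]
  rw [integral_const_mul, integral_gaussian, ← sqrt_inv, ← sqrt_mul (by positivity), ← sqrt_inv]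
  congr 2
  field_simp

lemma lintegral_tsum_ofReal_mul_exp_mul_sq {Ω κ : Type*} [MeasurableSpace Ω] [Countable κ]
    {P : Measure Ω} {X : κ → Ω → ℝ} (hX : ∀ n, Measurable (X n))
    (hgauss : ∀ n, P.map (X n) = gaussianReal 0 1) {w : κ → ℝ} (hw : ∀ n, 0 ≤ w n)
    (hw₁ : HasSum w 1) {θ : ℝ} (hθ : θ < 1 / 2) :
    ∫⁻ t, ∑' n, ENNReal.ofReal (w n * exp (θ * X n t ^ 2)) ∂P
      = ENNReal.ofReal (√(1 - 2 * θ))⁻¹ := by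
  have hterm (n : κ) :
      ∫⁻ t, ENNReal.ofReal (w n) * ENNReal.ofReal (exp (θ * X n t ^ 2)) ∂P
        = ENNReal.ofReal (w n) * ENNReal.ofReal (√(1 - 2 * θ))⁻¹ := by
    rw [lintegral_const_mul _ (by fun_prop), ← lintegral_exp_mul_sq_gaussianReal hθ, ← hgauss n,
      lintegral_map (by fun_prop) (hX n)]
  simp_rw [ENNReal.ofReal_mul (hw _)]
  rw [lintegral_tsum fun n ↦ by fun_prop]
  simp_rw [hterm]
  rw [ENNReal.tsum_mul_right, ← ENNReal.ofReal_tsum_of_nonneg hw hw₁.summable, hw₁.tsum_eq,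
    ENNReal.ofReal_one, one_mul]

lemma ProbabilityTheory.iIndepFun.curry {Ω ι κ X : Type*} [MeasurableSpace Ω] [MeasurableSpace X]
    {P : Measure Ω} {c : ι × κ → Ω → X} (hc : ∀ p, Measurable (c p)) (h : iIndepFun c P) :
    iIndepFun (fun i ω j ↦ c (i, j) ω) P := by
  have := h.isProbabilityMeasure
  have (i : ι) (j : κ) := Measure.isProbabilityMeasure_map (μ := P) (hc (i, j)).aemeasurable
  have hrow (i : ι) :
      P.map (fun ω j ↦ c (i, j) ω) = Measure.infinitePi fun j ↦ P.map (c (i, j)) :=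
    (h.precomp (Prod.mk_right_injective i)).map_fun_eq_infinitePi_map fun j ↦ hc (i, j)
  rw [iIndepFun_iff_map_fun_eq_infinitePi_map (fun i ↦ by fun_prop)]
  simp_rw [hrow]
  rw [← Measure.infinitePi_map_curry (fun i j ↦ P.map (c (i, j))),
    ← h.map_fun_eq_infinitePi_map hc, Measure.map_map (by fun_prop) (by fun_prop)]
  rfl

lemma measure_lt_sum_tsum_mul_sq_le {Ω ι κ : Type*} [MeasurableSpace Ω] [Fintype ι] [Countable κ]
    {P : Measure Ω} {c : ι × κ → Ω → ℝ} (hc : ∀ p, Measurable (c p)) (hindep : iIndepFun c P)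
    (hgauss : ∀ p, P.map (c p) = gaussianReal 0 1) {w : κ → ℝ} (hw : ∀ n, 0 ≤ w n)
    (hw₁ : HasSum w 1) {s : ℝ} (hs : 1 ≤ s) :
    P {t | Fintype.card ι * s ^ 2 < ∑ j, ∑' n, w n * c (j, n) t ^ 2}
      ≤ ENNReal.ofReal ((s * exp (-(s ^ 2 - 1) / 2)) ^ Fintype.card ι) := by
  set N := Fintype.card ι
  have hs₀ : 0 < s := by linarith
  set θ := (1 - (s ^ 2)⁻¹) / 2 with hθ
  have hθ₀ : 0 ≤ θ := by linarith [inv_le_one_of_one_le₀ (one_le_pow₀ (n := 2) hs)]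
  have hθs : θ * s ^ 2 = (s ^ 2 - 1) / 2 := by rw [hθ]; field_simp
  set g : (κ → ℝ) → ℝ≥0∞ := fun r ↦ ∑' n, ENNReal.ofReal (w n * exp (θ * r n ^ 2))
  have hg : Measurable g := Measurable.tsum fun n ↦ by fun_prop
  set F : ι → Ω → ℝ≥0∞ := fun j t ↦ g fun n ↦ c (j, n) t
  have hF_meas (j : ι) : Measurable (F j) := hg.comp (by fun_prop)
  have hF_indep : iIndepFun F P := (hindep.curry hc).comp (fun _ ↦ g) fun _ ↦ hg
  have hF_mean (j : ι) : ∫⁻ t, F j t ∂P = ENNReal.ofReal s := by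
    rw [lintegral_tsum_ofReal_mul_exp_mul_sq (fun n ↦ hc (j, n)) (fun n ↦ hgauss (j, n)) hw hw₁
      (by linarith [inv_pos.2 (pow_pos hs₀ 2)]),
      show 1 - 2 * θ = (s ^ 2)⁻¹ by rw [hθ]; ring, sqrt_inv, sqrt_sq hs₀.le, inv_inv]
  have hprod : ∫⁻ t, ∏ j, F j t ∂P = ENNReal.ofReal s ^ N := by
    rw [lintegral_prod_eq_prod_lintegral_of_indepFun _ _ hF_indep hF_meas]
    simp [hF_mean, N]
  set M := ENNReal.ofReal (exp (θ * (N * s ^ 2)))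
  have hsub : {t | N * s ^ 2 < ∑ j, ∑' n, w n * c (j, n) t ^ 2} ⊆ {t | M ≤ ∏ j, F j t} := by
    intro t ht
    calc M ≤ ENNReal.ofReal (exp (∑ j, ∑' n, w n * (θ * c (j, n) t ^ 2))) := by
          refine ENNReal.ofReal_le_ofReal (exp_le_exp.2 ?_)
          simp_rw [mul_left_comm (w _) θ, tsum_mul_left, ← Finset.mul_sum]
          exact mul_le_mul_of_nonneg_left ht.le hθ₀
      _ = ∏ j, ENNReal.ofReal (exp (∑' n, w n * (θ * c (j, n) t ^ 2))) := by
          rw [exp_sum, ENNReal.ofReal_prod_of_nonneg fun j _ ↦ (exp_pos _).le]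
      _ ≤ ∏ j, F j t := Finset.prod_le_prod' fun j _ ↦
          ENNReal.ofReal_exp_tsum_mul_le hw hw₁ fun n ↦ by positivity
  calc P {t | N * s ^ 2 < ∑ j, ∑' n, w n * c (j, n) t ^ 2}
      ≤ (∫⁻ t, ∏ j, F j t ∂P) / M := (measure_mono hsub).trans
        (meas_ge_le_lintegral_div (by fun_prop) (by positivity) ENNReal.ofReal_ne_top)
    _ = ENNReal.ofReal ((s * exp (-(s ^ 2 - 1) / 2)) ^ N) := by
      rw [hprod, ← ENNReal.ofReal_pow hs₀.le, ← ENNReal.ofReal_div_of_pos (exp_pos _),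
        div_eq_mul_inv, ← exp_neg, mul_pow, ← exp_nat_mul]
      congr 3
      linear_combination (-(N : ℝ)) * hθs

theorem stmt_10_general {Ωs : Type*} [MeasurableSpace Ωs] (P : Measure Ωs) [IsProbabilityMeasure P]
    {d : ℕ} (μ : Measure (EuclideanSpace ℝ (Fin d)))
    (lam : ℕ → ℝ) (hlam_pos : ∀ n, 0 < lam n) (hlam_sum : Summable lam)
    (ψ : ℕ → Lp ℝ 2 μ) (hψon : Orthonormal ℝ ψ) (l : ℕ)
    (c : Fin l × ℕ → Ωs → ℝ) (hcmeas : ∀ i, Measurable (c i))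
    (hindep : iIndepFun c P)
    (hgauss : ∀ i, Measure.map (c i) P = gaussianReal 0 1)
    (W : Fin l → Ωs → Lp ℝ 2 μ)
    (hW : W = fun j t => ∑' n, (Real.sqrt (lam n) * c (j, n) t) • ψ n)
    (v₂ : ℕ → Lp ℝ 2 μ) (hv₂on : Orthonormal ℝ v₂)
    (s : ℝ) (hs : 1 ≤ s) :
    (P {t | (∑ j : Fin l, ∑' n, (⟪v₂ n, W j t⟫ : ℝ) ^ 2)
        > l * s ^ 2 * ∑' n, lam n}).toReal
      ≤ (s * Real.exp (-(s ^ 2 - 1) / 2)) ^ l := by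
  set T := ∑' n, lam n
  have hT : 0 < T := hlam_sum.tsum_pos (fun n ↦ (hlam_pos n).le) 0 (hlam_pos 0)
  have hw : HasSum (fun n ↦ lam n / T) 1 := div_self hT.ne' ▸ hlam_sum.hasSum.div_const T
  have hbessel (j : Fin l) (t : Ωs) :
      ∑' n, ⟪v₂ n, W j t⟫ ^ 2 ≤ ∑' n, lam n * c (j, n) t ^ 2 := by
    simpa [hW, mul_pow, sq_sqrt (hlam_pos _).le] using
      hv₂on.tsum_inner_tsum_smul_sq_le hψon fun n ↦ √(lam n) * c (j, n) t
  have hsub : {t | (∑ j : Fin l, ∑' n, ⟪v₂ n, W j t⟫ ^ 2) > l * s ^ 2 * T}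
      ⊆ {t | Fintype.card (Fin l) * s ^ 2 < ∑ j, ∑' n, lam n / T * c (j, n) t ^ 2} := by
    intro t ht
    simp_rw [Set.mem_ofPred_eq, Fintype.card_fin, div_mul_eq_mul_div, tsum_div_const,
      ← Finset.sum_div, lt_div_iff₀ hT]
    exact ht.trans_le (Finset.sum_le_sum fun j _ ↦ hbessel j t)
  refine ENNReal.toReal_le_of_le_ofReal (by positivity) ((measure_mono hsub).trans ?_)
  simpa using measure_lt_sum_tsum_mul_sq_le hcmeas hindep hgauss
    (fun n ↦ div_nonneg (hlam_pos n).le hT.le) hw hs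

/-- Let `Ω = [ω_1 | ⋯ | ω_ℓ]` be a quasimatrix whose columns are
independent random functions drawn from `GP(0,K)`, with `ℓ ≥ k ≥ 1`, and let
`Ω₂ = V₂*Ω` where `V₂` has countably many orthonormal columns in `L²(D)`. Then for all
`s ≥ 1`, `P{ ‖Ω₂‖²_HS > ℓ s² Tr(K) } ≤ (s e^{−(s²−1)/2})^ℓ`. -/
theorem stmt_10 {Ωs : Type*} [MeasurableSpace Ωs] (P : Measure Ωs) [IsProbabilityMeasure P]
    {d : ℕ} (hd : 1 ≤ d) (D : Set (EuclideanSpace ℝ (Fin d))) (hD : MeasurableSet D)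
    (μ : Measure (EuclideanSpace ℝ (Fin d))) (hμ : μ = volume.restrict D)
    (K : EuclideanSpace ℝ (Fin d) → EuclideanSpace ℝ (Fin d) → ℝ)
    (hKcont : ContinuousOn (fun p : EuclideanSpace ℝ (Fin d) × EuclideanSpace ℝ (Fin d)
      => K p.1 p.2) (D ×ˢ D))
    (hKsymm : ∀ x y, K x y = K y x)
    (lam : ℕ → ℝ) (hlam_pos : ∀ n, 0 < lam n) (hlam_anti : Antitone lam)
    (hlam_sum : Summable lam)
    (ψraw : ℕ → EuclideanSpace ℝ (Fin d) → ℝ) (hψmem : ∀ n, MemLp (ψraw n) 2 μ)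
    (ψ : ℕ → Lp ℝ 2 μ) (hψdef : ∀ n, ψ n = (hψmem n).toLp (ψraw n))
    (hψon : Orthonormal ℝ ψ)
    (hψtot : (Submodule.span ℝ (Set.range ψ)).topologicalClosure = ⊤)
    (hMercer : ∀ x ∈ D, ∀ y ∈ D, K x y = ∑' n, lam n * ψraw n x * ψraw n y)
    (k l : ℕ) (hk : 1 ≤ k) (hkl : k ≤ l)
    (c : Fin l × ℕ → Ωs → ℝ) (hcmeas : ∀ i, Measurable (c i))
    (hindep : iIndepFun c P)
    (hgauss : ∀ i, Measure.map (c i) P = gaussianReal 0 1)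
    (W : Fin l → Ωs → Lp ℝ 2 μ)
    (hW : W = fun j t => ∑' n, (Real.sqrt (lam n) * c (j, n) t) • ψ n)
    (v₂ : ℕ → Lp ℝ 2 μ) (hv₂on : Orthonormal ℝ v₂)
    (s : ℝ) (hs : 1 ≤ s) :
    (P {t | (∑ j : Fin l, ∑' n, (⟪v₂ n, W j t⟫ : ℝ) ^ 2)
        > l * s ^ 2 * ∑' n, lam n}).toReal
      ≤ (s * Real.exp (-(s ^ 2 - 1) / 2)) ^ l :=
  stmt_10_general P μ lam hlam_pos hlam_sum ψ hψon l c hcmeas hindep hgauss W hW v₂ hv₂on s hs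
end

section
/- Let n ≥ 1 and consider the level-n hierarchical partition of [0,1]³ into dyadic cubes of side length 2^{−n}, with non-admissible set P_nonadm(n) consisting of all pairs of level-n cubes whose index vectors differ by at most 1 in each coordinate. Suppose G : [0,1]³ × [0,1]³ → ℝ is measurable and satisfies |G(x,y)| ≤ c M / ‖x − y‖₂ for almost every x ≠ y, for constants c, M ≥ 0. Then ∑_{τ×σ ∈ P_nonadm(n)} ‖G‖_{L²(τ×σ)}² ≤ 54 π² (6 + √3) c² 2^{−n} M². -/
/-!
Write `s = 2⁻ⁿ`. For a fixed `x` and any set `σ` of volume at most `s³`, the layer-cake formula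
bounds `∫_σ ‖x - y‖⁻² dy` by `(1 + 8π/3) s`: for levels `t ≤ s⁻²` the level set has measure at most
`vol σ`, and for larger `t` it lies in the ball of radius `t^{-1/2}` around `x`, of volume
`(4π/3) t^{-3/2}`. Integrating over `x ∈ τ` bounds the contribution of each non-admissible pair of
cubes by `(1 + 8π/3) (cM)² s⁴`, and there are at most `27 · 8ⁿ` such pairs, so the sum is at most
`(27 + 72π) (cM)² 2⁻ⁿ`.
-/

open MeasureTheory

/-- The dyadic cube of level `n` of `[0,1]³` with index vector `j`,
where `2ⁿ ≤ jᵢ ≤ 2^{n+1} − 1`: the product of the intervals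
`I_{jᵢ} = [(jᵢ − 2ⁿ)/2ⁿ, (jᵢ − 2ⁿ + 1)/2ⁿ]`. -/
def dyadicCube (n : ℕ) (j : Fin 3 → ℕ) : Set (EuclideanSpace ℝ (Fin 3)) :=
  {x | ∀ i : Fin 3,
    ((j i : ℝ) - 2 ^ n) / 2 ^ n ≤ x i ∧ x i ≤ ((j i : ℝ) - 2 ^ n + 1) / 2 ^ n}

/-- The set of non-admissible pairs of index vectors at level `n`: indices
`2ⁿ ≤ jᵢ, ĵᵢ ≤ 2^{n+1} − 1` with `|jᵢ − ĵᵢ| ≤ 1` for all `i`. -/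
noncomputable def nonAdmPairs (n : ℕ) : Finset ((Fin 3 → ℕ) × (Fin 3 → ℕ)) :=
  ((Fintype.piFinset fun _ : Fin 3 => Finset.Icc (2 ^ n) (2 ^ (n + 1) - 1)) ×ˢ
      (Fintype.piFinset fun _ : Fin 3 => Finset.Icc (2 ^ n) (2 ^ (n + 1) - 1))).filter
    (fun p => ∀ i : Fin 3, |(p.1 i : ℤ) - (p.2 i : ℤ)| ≤ 1)

/-- The unit cube `[0,1]³`. -/
def unitCube : Set (EuclideanSpace ℝ (Fin 3)) := {x | ∀ i : Fin 3, 0 ≤ x i ∧ x i ≤ 1}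

open Metric Set Real

local notation "ℝ³" => EuclideanSpace ℝ (Fin 3)

theorem EuclideanSpace.volume_setOf_forall_mem_Icc {ι : Type*} [Fintype ι] (a b : ι → ℝ) :
    volume {x : EuclideanSpace ℝ ι | ∀ i, x i ∈ Icc (a i) (b i)} =
      ∏ i, ENNReal.ofReal (b i - a i) := by
  have hset : {x : EuclideanSpace ℝ ι | ∀ i, x i ∈ Icc (a i) (b i)} =
      (MeasurableEquiv.toLp 2 (ι → ℝ)).symm ⁻¹' Icc a b := by
    ext x; simp [Pi.le_def, forall_and]
  rw [hset, (EuclideanSpace.volume_preserving_symm_measurableEquiv_toLp ι).measure_preimage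
    measurableSet_Icc.nullMeasurableSet, Real.volume_Icc_pi]

theorem ae_fst_ne_snd_prod {α : Type*} [MeasurableSpace α] [MeasurableEq α]
    (μ ν : Measure α) [SFinite ν] [NullSingletonClass ν] : ∀ᵐ q ∂μ.prod ν, q.1 ≠ q.2 := by
  have hfiber (x : α) : Prod.mk x ⁻¹' diagonal α = {x} := by
    ext y; simp [eq_comm]
  simp only [ae_iff, ne_eq, not_not]
  change μ.prod ν (diagonal α) = 0
  simp [Measure.prod_apply measurableSet_diagonal, hfiber]

theorem volume_dyadicCube (n : ℕ) (j : Fin 3 → ℕ) :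
    volume (dyadicCube n j) = ENNReal.ofReal (((2 : ℝ) ^ n)⁻¹ ^ 3) := by
  change volume {x : ℝ³ | ∀ i, x i ∈
    Icc (((j i : ℝ) - 2 ^ n) / 2 ^ n) (((j i : ℝ) - 2 ^ n + 1) / 2 ^ n)} = _
  simp_rw [EuclideanSpace.volume_setOf_forall_mem_Icc, ← sub_div, add_sub_cancel_left, one_div]
  rw [Finset.prod_const, Finset.card_univ, Fintype.card_fin, ENNReal.ofReal_pow (by positivity)]

theorem dyadicCube_subset_unitCube {n : ℕ} {j : Fin 3 → ℕ}
    (hj : j ∈ Fintype.piFinset fun _ => Finset.Icc (2 ^ n) (2 ^ (n + 1) - 1)) :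
    dyadicCube n j ⊆ unitCube := by
  intro x hx i
  obtain ⟨hlo, hhi⟩ := Finset.mem_Icc.1 (Fintype.mem_piFinset.1 hj i)
  have hj_lo : (2 : ℝ) ^ n ≤ j i := mod_cast hlo
  have hj_hi : (j i : ℝ) + 1 ≤ 2 * 2 ^ n := by
    have : j i + 1 ≤ 2 * 2 ^ n := by
      rw [pow_succ] at hhi; have := Nat.one_le_two_pow (n := n); omega
    exact_mod_cast this
  have h2n : (0 : ℝ) < 2 ^ n := by positivity
  refine ⟨(div_nonneg ?_ h2n.le).trans (hx i).1, (hx i).2.trans ((div_le_one h2n).2 ?_)⟩ <;>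
    linarith

theorem card_nonAdmPairs_le (n : ℕ) : (nonAdmPairs n).card ≤ 27 * 8 ^ n := by
  let I := Fintype.piFinset fun _ : Fin 3 => Finset.Icc (2 ^ n) (2 ^ (n + 1) - 1)
  let D := Fintype.piFinset fun _ : Fin 3 => Finset.Icc (-1 : ℤ) 1
  have hinj : (nonAdmPairs n).card ≤ (I ×ˢ D).card := by
    refine Finset.card_le_card_of_injOn (fun p => (p.1, fun i => (p.2 i : ℤ) - p.1 i)) ?_ ?_
    · intro p hp
      simp only [nonAdmPairs, Finset.coe_filter, Finset.mem_product, mem_ofPred_eq] at hp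
      simp only [Finset.coe_product, mem_prod, Finset.mem_coe, D, Fintype.mem_piFinset,
        Finset.mem_Icc]
      exact ⟨hp.1.1, fun i => by have := abs_le.1 (hp.2 i); omega⟩
    · intro p _ q _ hpq
      simp only [Prod.mk.injEq, funext_iff] at hpq
      ext i
      · rw [hpq.1]
      · have := hpq.2 i; rw [hpq.1 i] at this; omega
  have hD : (Finset.Icc (-1 : ℤ) 1).card = 3 := rfl
  have hI : (Finset.Icc (2 ^ n) (2 ^ (n + 1) - 1)).card = 2 ^ n := by
    rw [Nat.card_Icc, pow_succ]; have := Nat.one_le_two_pow (n := n); omega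
  calc (nonAdmPairs n).card ≤ (I ×ˢ D).card := hinj
    _ = 27 * 8 ^ n := by
      simp only [I, D, Finset.card_product, Fintype.card_piFinset, hI, hD,
        Finset.prod_const, Finset.card_univ, Fintype.card_fin]
      rw [← pow_mul, mul_comm n, pow_mul]; norm_num [mul_comm]

theorem volume_setOf_lt_inv_norm_sub_sq_le (x : ℝ³) {t : ℝ} (ht : 0 < t) :
    volume {y : ℝ³ | t < (‖x - y‖ ^ 2)⁻¹} ≤ ENNReal.ofReal (π * 4 / 3 * t ^ (-(3 / 2) : ℝ)) := by
  have hsub : {y : ℝ³ | t < (‖x - y‖ ^ 2)⁻¹} ⊆ ball x √t⁻¹ := by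
    intro y hy
    have hd : 0 < ‖x - y‖ ^ 2 := inv_pos.1 (ht.trans hy)
    rw [mem_ball, dist_comm, dist_eq_norm, Real.lt_sqrt (norm_nonneg _)]
    exact (lt_inv_comm₀ ht hd).1 hy
  have hradius : √t⁻¹ ^ 3 = t ^ (-(3 / 2) : ℝ) := by
    rw [Real.sqrt_eq_rpow, ← Real.rpow_natCast, ← Real.rpow_mul (by positivity),
      Real.inv_rpow ht.le, ← Real.rpow_neg ht.le]
    norm_num
  calc volume {y : ℝ³ | t < (‖x - y‖ ^ 2)⁻¹} ≤ volume (ball x √t⁻¹) := measure_mono hsub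
    _ = ENNReal.ofReal (π * 4 / 3 * t ^ (-(3 / 2) : ℝ)) := by
      rw [EuclideanSpace.volume_ball_fin_three, ← ENNReal.ofReal_pow (by positivity),
        ← ENNReal.ofReal_mul (by positivity), hradius, mul_comm]

theorem lintegral_inv_norm_sub_sq_le (x : ℝ³) {σ : Set ℝ³} {s : ℝ} (hs : 0 < s)
    (hσ : volume σ ≤ ENNReal.ofReal (s ^ 3)) :
    ∫⁻ y in σ, ENNReal.ofReal ((‖x - y‖ ^ 2)⁻¹) ≤ ENNReal.ofReal ((1 + 8 * π / 3) * s) := by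
  set t₀ : ℝ := (s ^ 2)⁻¹
  have ht₀ : 0 < t₀ := by positivity
  have hmeas : Measurable fun y : ℝ³ => (‖x - y‖ ^ 2)⁻¹ := by fun_prop
  rw [lintegral_eq_lintegral_meas_lt _ (ae_of_all _ fun y => by positivity) hmeas.aemeasurable,
    ← Ioc_union_Ioi_eq_Ioi ht₀.le, lintegral_union measurableSet_Ioi Ioc_disjoint_Ioi_same]
  have hsmall : ∫⁻ t in Ioc 0 t₀, volume.restrict σ {y | t < (‖x - y‖ ^ 2)⁻¹} ≤
      ENNReal.ofReal s :=
    calc ∫⁻ t in Ioc 0 t₀, volume.restrict σ {y | t < (‖x - y‖ ^ 2)⁻¹}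
        ≤ ∫⁻ _ in Ioc 0 t₀, ENNReal.ofReal (s ^ 3) :=
          setLIntegral_mono measurable_const fun t _ =>
            (measure_mono (subset_univ _)).trans (by simpa using hσ)
      _ = ENNReal.ofReal s := by
          rw [setLIntegral_const, Real.volume_Ioc, sub_zero, ← ENNReal.ofReal_mul (by positivity)]
          congr 1
          simp only [t₀]
          field_simp
  have hlarge : ∫⁻ t in Ioi t₀, volume.restrict σ {y | t < (‖x - y‖ ^ 2)⁻¹} ≤
      ENNReal.ofReal (8 * π / 3 * s) :=
    calc ∫⁻ t in Ioi t₀, volume.restrict σ {y | t < (‖x - y‖ ^ 2)⁻¹}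
        ≤ ∫⁻ t in Ioi t₀, ENNReal.ofReal (π * 4 / 3 * t ^ (-(3 / 2) : ℝ)) :=
          setLIntegral_mono (by fun_prop) fun t ht =>
            (Measure.restrict_le_self _).trans
              (volume_setOf_lt_inv_norm_sub_sq_le x (ht₀.trans ht))
      _ = ENNReal.ofReal (∫ t in Ioi t₀, π * 4 / 3 * t ^ (-(3 / 2) : ℝ)) :=
          (ofReal_integral_eq_lintegral_ofReal
            ((integrableOn_Ioi_rpow_of_lt (by norm_num) ht₀).const_mul _)
            ((ae_restrict_mem measurableSet_Ioi).mono fun t ht =>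
              by have := ht₀.trans ht; positivity)).symm
      _ = ENNReal.ofReal (8 * π / 3 * s) := by
          have hs_eq : t₀ ^ (-(3 / 2) + 1 : ℝ) = s := by
            rw [Real.inv_rpow (by positivity), ← Real.rpow_natCast, ← Real.rpow_mul hs.le,
              ← Real.rpow_neg hs.le]
            norm_num
          rw [integral_const_mul, integral_Ioi_rpow_of_lt (by norm_num) ht₀, hs_eq]
          congr 1
          ring
  calc _ ≤ ENNReal.ofReal s + ENNReal.ofReal (8 * π / 3 * s) := add_le_add hsmall hlarge
    _ = ENNReal.ofReal ((1 + 8 * π / 3) * s) := by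
      rw [← ENNReal.ofReal_add hs.le (by positivity)]
      ring_nf

theorem setIntegral_sq_le_of_abs_le_div_norm_sub (G : ℝ³ → ℝ³ → ℝ) {τ σ : Set ℝ³} {s K : ℝ}
    (hs : 0 < s) (hτ : volume τ ≤ ENNReal.ofReal (s ^ 3))
    (hσ : volume σ ≤ ENNReal.ofReal (s ^ 3))
    (hG : ∀ᵐ q ∂(volume.restrict (τ ×ˢ σ)), q.1 ≠ q.2 → |G q.1 q.2| ≤ K / ‖q.1 - q.2‖) :
    ∫ q in τ ×ˢ σ, G q.1 q.2 ^ 2 ≤ (1 + 8 * π / 3) * K ^ 2 * s ^ 4 := by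
  by_cases hint : Integrable (fun q : ℝ³ × ℝ³ => G q.1 q.2 ^ 2) (volume.restrict (τ ×ˢ σ))
  swap
  · rw [integral_undef hint]; positivity
  have hoff : ∀ᵐ q ∂(volume.restrict (τ ×ˢ σ)), q.1 ≠ q.2 :=
    ae_restrict_of_ae (by simpa [Measure.volume_eq_prod] using ae_fst_ne_snd_prod volume volume)
  have hpointwise : ∀ᵐ q ∂(volume.restrict (τ ×ˢ σ)), ENNReal.ofReal (G q.1 q.2 ^ 2) ≤
      ENNReal.ofReal (K ^ 2) * ENNReal.ofReal ((‖q.1 - q.2‖ ^ 2)⁻¹) := by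
    filter_upwards [hG, hoff] with q hGq hq
    rw [← ENNReal.ofReal_mul (sq_nonneg K), ← sq_abs, ← div_eq_mul_inv, ← div_pow]
    exact ENNReal.ofReal_le_ofReal (pow_le_pow_left₀ (abs_nonneg _) (hGq hq) 2)
  have hmeas : Measurable fun q : ℝ³ × ℝ³ => ENNReal.ofReal ((‖q.1 - q.2‖ ^ 2)⁻¹) := by
    fun_prop
  rw [← ENNReal.ofReal_le_ofReal_iff (by positivity),
    ofReal_integral_eq_lintegral_ofReal hint (ae_of_all _ fun _ => sq_nonneg _)]
  calc ∫⁻ q in τ ×ˢ σ, ENNReal.ofReal (G q.1 q.2 ^ 2)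
      ≤ ∫⁻ q in τ ×ˢ σ, ENNReal.ofReal (K ^ 2) * ENNReal.ofReal ((‖q.1 - q.2‖ ^ 2)⁻¹) :=
        lintegral_mono_ae hpointwise
    _ = ENNReal.ofReal (K ^ 2) * ∫⁻ x in τ, ∫⁻ y in σ, ENNReal.ofReal ((‖x - y‖ ^ 2)⁻¹) := by
        rw [lintegral_const_mul' _ _ ENNReal.ofReal_ne_top, Measure.volume_eq_prod,
          ← Measure.prod_restrict, lintegral_prod _ hmeas.aemeasurable]
    _ ≤ ENNReal.ofReal (K ^ 2) * ∫⁻ _ in τ, ENNReal.ofReal ((1 + 8 * π / 3) * s) := by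
        gcongr with x
        exact lintegral_inv_norm_sub_sq_le x hs hσ
    _ ≤ ENNReal.ofReal (K ^ 2) *
          (ENNReal.ofReal ((1 + 8 * π / 3) * s) * ENNReal.ofReal (s ^ 3)) := by
        rw [setLIntegral_const]
        gcongr
    _ = ENNReal.ofReal ((1 + 8 * π / 3) * K ^ 2 * s ^ 4) := by
        rw [← ENNReal.ofReal_mul (by positivity), ← ENNReal.ofReal_mul (by positivity)]
        ring_nf

theorem setIntegral_dyadicCube_prod_sq_le {n : ℕ} {p : (Fin 3 → ℕ) × (Fin 3 → ℕ)}
    (hp : p ∈ nonAdmPairs n) {G : ℝ³ → ℝ³ → ℝ} {K : ℝ}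
    (hG : ∀ᵐ q ∂(volume.restrict (unitCube ×ˢ unitCube)),
      q.1 ≠ q.2 → |G q.1 q.2| ≤ K / ‖q.1 - q.2‖) :
    ∫ q in (dyadicCube n p.1) ×ˢ (dyadicCube n p.2), G q.1 q.2 ^ 2 ≤
      (1 + 8 * π / 3) * K ^ 2 * ((2 : ℝ) ^ n)⁻¹ ^ 4 := by
  obtain ⟨hp₁, hp₂⟩ := Finset.mem_product.1 (Finset.mem_filter.1 hp).1
  exact setIntegral_sq_le_of_abs_le_div_norm_sub G (by positivity) (volume_dyadicCube n p.1).le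
    (volume_dyadicCube n p.2).le <| ae_restrict_of_ae_restrict_of_subset
      (prod_mono (dyadicCube_subset_unitCube hp₁) (dyadicCube_subset_unitCube hp₂)) hG

theorem stmt_16_general (n : ℕ)
    (G : EuclideanSpace ℝ (Fin 3) → EuclideanSpace ℝ (Fin 3) → ℝ)
    (c M : ℝ)
    (hGbound : ∀ᵐ p ∂(volume.restrict (unitCube ×ˢ unitCube)),
      p.1 ≠ p.2 → |G p.1 p.2| ≤ c * M / ‖p.1 - p.2‖) :
    ∑ p ∈ nonAdmPairs n, ∫ q in (dyadicCube n p.1) ×ˢ (dyadicCube n p.2), (G q.1 q.2) ^ 2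
      ≤ 54 * Real.pi ^ 2 * (6 + Real.sqrt 3) * c ^ 2 * (2 : ℝ) ^ (-(n : ℝ)) * M ^ 2 := by
  set s : ℝ := ((2 : ℝ) ^ n)⁻¹
  have hconst : 27 + 72 * π ≤ 54 * π ^ 2 * (6 + √3) := by
    nlinarith [pi_gt_three, Real.sqrt_nonneg 3]
  calc ∑ p ∈ nonAdmPairs n, ∫ q in (dyadicCube n p.1) ×ˢ (dyadicCube n p.2), G q.1 q.2 ^ 2
      ≤ (nonAdmPairs n).card • ((1 + 8 * π / 3) * (c * M) ^ 2 * s ^ 4) :=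
        Finset.sum_le_card_nsmul _ _ _ fun p hp =>
          setIntegral_dyadicCube_prod_sq_le hp hGbound
    _ ≤ (27 * 8 ^ n) • ((1 + 8 * π / 3) * (c * M) ^ 2 * s ^ 4) :=
        nsmul_le_nsmul_left (by positivity) (card_nonAdmPairs_le n)
    _ = (27 + 72 * π) * c ^ 2 * s * M ^ 2 := by
        have h8 : (8 : ℝ) ^ n = ((2 : ℝ) ^ n) ^ 3 := by
          rw [← pow_mul, mul_comm, pow_mul]; norm_num
        rw [nsmul_eq_mul]
        push_cast
        simp only [s, h8]
        field_simp
        ring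
    _ ≤ 54 * π ^ 2 * (6 + √3) * c ^ 2 * (2 : ℝ) ^ (-(n : ℝ)) * M ^ 2 := by
        rw [Real.rpow_neg zero_le_two, Real.rpow_natCast]
        gcongr

/-- If `G : [0,1]³ × [0,1]³ → ℝ` is measurable and satisfies
`|G(x,y)| ≤ c M / ‖x − y‖₂` almost everywhere for `x ≠ y`, then the squared `L²`-norm of
`G` over all non-admissible pairs of level-`n` dyadic cubes is at most
`54 π² (6 + √3) c² 2^{−n} M²`. -/
theorem stmt_16 (n : ℕ) (hn : 1 ≤ n)
    (G : EuclideanSpace ℝ (Fin 3) → EuclideanSpace ℝ (Fin 3) → ℝ)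
    (hGmeas : Measurable fun p : EuclideanSpace ℝ (Fin 3) × EuclideanSpace ℝ (Fin 3) =>
      G p.1 p.2)
    (c M : ℝ) (hc : 0 ≤ c) (hM : 0 ≤ M)
    (hGbound : ∀ᵐ p ∂(volume.restrict (unitCube ×ˢ unitCube)),
      p.1 ≠ p.2 → |G p.1 p.2| ≤ c * M / ‖p.1 - p.2‖) :
    ∑ p ∈ nonAdmPairs n, ∫ q in (dyadicCube n p.1) ×ˢ (dyadicCube n p.2), (G q.1 q.2) ^ 2
      ≤ 54 * Real.pi ^ 2 * (6 + Real.sqrt 3) * c ^ 2 * (2 : ℝ) ^ (-(n : ℝ)) * M ^ 2 :=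
  stmt_16_general n G c M hGbound
end
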